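/- arXiv:2306.13795 — 2 statements merged into one kernel-verified Lean document; each statement's English description precedes it below -/
import Mathlib

section
/- Let m, k ∈ ℕ, p_1, p_2, θ_1, θ_2 ∈ [1,∞], λ ∈ [0,1], and define p, θ ∈ [1,∞] by 1/p = (1−λ)/p_1 + λ/p_2 and 1/θ = (1−λ)/θ_1 + λ/θ_2. Then for every x = (x_{i,j})_{1≤i≤m, 1≤j≤k} ∈ ℝ^{m·k}: ‖x‖_{l^{m,k}_{p,θ}} ≤ ‖x‖_{l^{m,k}_{p_1,θ_1}}^{1−λ} · ‖x‖_{l^{m,k}_{p_2,θ_2}}^{λ}. -/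
open scoped ENNReal NNReal BigOperators Pointwise

noncomputable section

def lNorm (s : ℝ≥0∞) {ι : Type*} [Fintype ι] (x : ι → ℝ) : ℝ :=
  if s = ∞ then ⨆ i, |x i| else (∑ i, |x i| ^ s.toReal) ^ (1 / s.toReal)

def mixedNorm (p θ : ℝ≥0∞) {m k : ℕ} (x : Fin m → Fin k → ℝ) : ℝ :=
  lNorm θ fun j => lNorm p fun i => x i j

def mixedBall (m k : ℕ) (p θ : ℝ≥0∞) : Set (Fin m → Fin k → ℝ) :=
  {x | mixedNorm p θ x ≤ 1}

def kolWidth (m k n : ℕ) (M : Set (Fin m → Fin k → ℝ)) (q σ : ℝ≥0∞) : ℝ :=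
  ⨅ L : {L : Submodule ℝ (Fin m → Fin k → ℝ) // Module.finrank ℝ L ≤ n},
    ⨆ x : M, ⨅ y : L.1,
      mixedNorm q σ ((x : Fin m → Fin k → ℝ) - (y : Fin m → Fin k → ℝ))

def ir (p : ℝ≥0∞) : ℝ := p⁻¹.toReal

def omegaE (p q : ℝ≥0∞) : ℝ :=
  if q = 2 then 1 else min ((ir p - ir q) / (1 / 2 - ir q)) 1

def expOf (t : ℝ) : ℝ≥0∞ := (ENNReal.ofReal t)⁻¹

def Phi (q σ : ℝ≥0∞) (m k n : ℕ) (p θ : ℝ≥0∞) : ℝ≥0∞ :=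
  let M : ℝ≥0∞ := m
  let K : ℝ≥0∞ := k
  let W : ℝ≥0∞ := ((n : ℝ≥0∞))⁻¹ ^ ((1 : ℝ) / 2) * M ^ ir q * K ^ ir σ
  let Wm : ℝ≥0∞ := ((n : ℝ≥0∞))⁻¹ ^ ((1 : ℝ) / 2) * M ^ ((1 : ℝ) / 2) * K ^ ir σ
  let Wk : ℝ≥0∞ := ((n : ℝ≥0∞))⁻¹ ^ ((1 : ℝ) / 2) * M ^ ir q * K ^ ((1 : ℝ) / 2)
  if q ≤ p then
    if σ ≤ θ then
      M ^ (ir q - ir p) * K ^ (ir σ - ir θ)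
    else
      min (M ^ (ir q - ir p)) (M ^ (ir q - ir p) * Wm ^ omegaE θ σ)
  else if σ ≤ θ then
    min (K ^ (ir σ - ir θ)) (K ^ (ir σ - ir θ) * Wk ^ omegaE p q)
  else if p ≤ 2 ∧ θ ≤ 2 then
    min 1 W
  else if omegaE p q ≤ omegaE θ σ then
    min (min 1 (W ^ omegaE p q)) (M ^ (ir q - ir p) * Wm ^ omegaE θ σ)
  else
    min (min 1 (W ^ omegaE θ σ)) (K ^ (ir σ - ir θ) * Wk ^ omegaE p q)

/-- `Ψ₀ = inf_{α ∈ A} ν_α Φ(p_α, θ_α)`. -/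
def Psi0 {A : Type*} (q σ : ℝ≥0∞) (m k n : ℕ) (p θ : A → ℝ≥0∞) (ν : A → ℝ) : ℝ≥0∞ :=
  ⨅ a : A, ENNReal.ofReal (ν a) * Phi q σ m k n (p a) (θ a)

/-- `Ψ₁`: infimum over pairs `(α, β) ∈ N₁`, i.e. `p_α ≠ q` and
`1/q = (1−λ)/p_α + λ/p_β` for some `λ ∈ (0,1)`, of
`ν_α^{1−λ} ν_β^{λ} Φ(q, θ̂_{α,β})` where `1/θ̂_{α,β} = (1−λ)/θ_α + λ/θ_β`. -/
def Psi1 {A : Type*} (q σ : ℝ≥0∞) (m k n : ℕ) (p θ : A → ℝ≥0∞) (ν : A → ℝ) : ℝ≥0∞ :=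
  ⨅ (a : A) (b : A) (lam : ℝ)
    (_ : 0 < lam ∧ lam < 1 ∧ p a ≠ q ∧
      ir q = (1 - lam) * ir (p a) + lam * ir (p b)),
    ENNReal.ofReal (ν a) ^ (1 - lam) * ENNReal.ofReal (ν b) ^ lam *
      Phi q σ m k n q (expOf ((1 - lam) * ir (θ a) + lam * ir (θ b)))

/-- `Ψ₂`: infimum over `(α, β) ∈ N₂` of `ν_α^{1−μ} ν_β^{μ} Φ(p̂_{α,β}, σ)`. -/
def Psi2 {A : Type*} (q σ : ℝ≥0∞) (m k n : ℕ) (p θ : A → ℝ≥0∞) (ν : A → ℝ) : ℝ≥0∞ :=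
  ⨅ (a : A) (b : A) (lam : ℝ)
    (_ : 0 < lam ∧ lam < 1 ∧ θ a ≠ σ ∧
      ir σ = (1 - lam) * ir (θ a) + lam * ir (θ b)),
    ENNReal.ofReal (ν a) ^ (1 - lam) * ENNReal.ofReal (ν b) ^ lam *
      Phi q σ m k n (expOf ((1 - lam) * ir (p a) + lam * ir (p b))) σ

/-- `Ψ₃`: infimum over `(α, β) ∈ N₃` of `ν_α^{1−λ} ν_β^{λ} Φ(2, θ̃_{α,β})`. -/
def Psi3 {A : Type*} (q σ : ℝ≥0∞) (m k n : ℕ) (p θ : A → ℝ≥0∞) (ν : A → ℝ) : ℝ≥0∞ :=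
  ⨅ (a : A) (b : A) (lam : ℝ)
    (_ : 0 < lam ∧ lam < 1 ∧ p a ≠ 2 ∧
      (1 : ℝ) / 2 = (1 - lam) * ir (p a) + lam * ir (p b)),
    ENNReal.ofReal (ν a) ^ (1 - lam) * ENNReal.ofReal (ν b) ^ lam *
      Phi q σ m k n 2 (expOf ((1 - lam) * ir (θ a) + lam * ir (θ b)))

/-- `Ψ₄`: infimum over `(α, β) ∈ N₄` of `ν_α^{1−μ} ν_β^{μ} Φ(p̃_{α,β}, 2)`. -/
def Psi4 {A : Type*} (q σ : ℝ≥0∞) (m k n : ℕ) (p θ : A → ℝ≥0∞) (ν : A → ℝ) : ℝ≥0∞ :=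
  ⨅ (a : A) (b : A) (lam : ℝ)
    (_ : 0 < lam ∧ lam < 1 ∧ θ a ≠ 2 ∧
      (1 : ℝ) / 2 = (1 - lam) * ir (θ a) + lam * ir (θ b)),
    ENNReal.ofReal (ν a) ^ (1 - lam) * ENNReal.ofReal (ν b) ^ lam *
      Phi q σ m k n (expOf ((1 - lam) * ir (p a) + lam * ir (p b))) 2

/-- `Ψ₅`: infimum over `(α, β) ∈ N₅`, i.e. such that for some `λ ∈ (0,1)` the
interpolated exponents satisfy `p_{α,β} ∈ (2,q)`, `θ_{α,β} ∈ (2,σ)`, lie on the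
"critical line", while `(1/p_α, 1/θ_α)` does not, of
`ν_α^{1−λ} ν_β^{λ} Φ(p_{α,β}, θ_{α,β})`. -/
def Psi5 {A : Type*} (q σ : ℝ≥0∞) (m k n : ℕ) (p θ : A → ℝ≥0∞) (ν : A → ℝ) : ℝ≥0∞ :=
  ⨅ (a : A) (b : A) (lam : ℝ)
    (_ : 0 < lam ∧ lam < 1 ∧
      ir q < (1 - lam) * ir (p a) + lam * ir (p b) ∧
      (1 - lam) * ir (p a) + lam * ir (p b) < 1 / 2 ∧
      ir σ < (1 - lam) * ir (θ a) + lam * ir (θ b) ∧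
      (1 - lam) * ir (θ a) + lam * ir (θ b) < 1 / 2 ∧
      ((1 - lam) * ir (p a) + lam * ir (p b) - ir q) / (1 / 2 - ir q) =
        ((1 - lam) * ir (θ a) + lam * ir (θ b) - ir σ) / (1 / 2 - ir σ) ∧
      (ir (p a) - ir q) / (1 / 2 - ir q) ≠ (ir (θ a) - ir σ) / (1 / 2 - ir σ)),
    ENNReal.ofReal (ν a) ^ (1 - lam) * ENNReal.ofReal (ν b) ^ lam *
      Phi q σ m k n (expOf ((1 - lam) * ir (p a) + lam * ir (p b)))
        (expOf ((1 - lam) * ir (θ a) + lam * ir (θ b)))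

/-- `Ψ₆`: infimum over triples `(α, β, γ) ∈ N₆` (with positive weights `τ` summing to `1`
interpolating `(1/q, 1/σ)`, the three points not collinear) of
`ν_α^{τ_α} ν_β^{τ_β} ν_γ^{τ_γ} Φ(q, σ)`. -/
def Psi6 {A : Type*} (q σ : ℝ≥0∞) (m k n : ℕ) (p θ : A → ℝ≥0∞) (ν : A → ℝ) : ℝ≥0∞ :=
  ⨅ (a : A) (b : A) (c : A) (ta : ℝ) (tb : ℝ) (tc : ℝ)
    (_ : 0 < ta ∧ 0 < tb ∧ 0 < tc ∧ ta + tb + tc = 1 ∧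
      ir q = ta * ir (p a) + tb * ir (p b) + tc * ir (p c) ∧
      ir σ = ta * ir (θ a) + tb * ir (θ b) + tc * ir (θ c) ∧
      (ir (p b) - ir (p a)) * (ir (θ c) - ir (θ a)) ≠
        (ir (p c) - ir (p a)) * (ir (θ b) - ir (θ a))),
    ENNReal.ofReal (ν a) ^ ta * ENNReal.ofReal (ν b) ^ tb * ENNReal.ofReal (ν c) ^ tc *
      Phi q σ m k n q σ

/-- `Ψ₇`: as `Ψ₆`, with `(1/2, 1/2)` in place of `(1/q, 1/σ)`. -/
def Psi7 {A : Type*} (q σ : ℝ≥0∞) (m k n : ℕ) (p θ : A → ℝ≥0∞) (ν : A → ℝ) : ℝ≥0∞ :=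
  ⨅ (a : A) (b : A) (c : A) (ta : ℝ) (tb : ℝ) (tc : ℝ)
    (_ : 0 < ta ∧ 0 < tb ∧ 0 < tc ∧ ta + tb + tc = 1 ∧
      (1 : ℝ) / 2 = ta * ir (p a) + tb * ir (p b) + tc * ir (p c) ∧
      (1 : ℝ) / 2 = ta * ir (θ a) + tb * ir (θ b) + tc * ir (θ c) ∧
      (ir (p b) - ir (p a)) * (ir (θ c) - ir (θ a)) ≠
        (ir (p c) - ir (p a)) * (ir (θ b) - ir (θ a))),
    ENNReal.ofReal (ν a) ^ ta * ENNReal.ofReal (ν b) ^ tb * ENNReal.ofReal (ν c) ^ tc *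
      Phi q σ m k n 2 2

/-- `min_{0 ≤ j ≤ 7} Ψ_j`. -/
def PsiMin {A : Type*} (q σ : ℝ≥0∞) (m k n : ℕ) (p θ : A → ℝ≥0∞) (ν : A → ℝ) : ℝ≥0∞ :=
  Psi0 q σ m k n p θ ν ⊓ Psi1 q σ m k n p θ ν ⊓ Psi2 q σ m k n p θ ν ⊓
    Psi3 q σ m k n p θ ν ⊓ Psi4 q σ m k n p θ ν ⊓ Psi5 q σ m k n p θ ν ⊓
    Psi6 q σ m k n p θ ν ⊓ Psi7 q σ m k n p θ ν

/-- The set `V^{m,k}_{r,l}`: the convex hull of all `γ(e)`, where `e` is the 0/1 matrix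
supported on the first `r` rows and first `l` columns and `γ` ranges over all
permutations of rows/columns composed with sign changes of rows/columns. -/
def Vset (m k r l : ℕ) : Set (Fin m → Fin k → ℝ) :=
  convexHull ℝ {y | ∃ (t₁ : Equiv.Perm (Fin m)) (t₂ : Equiv.Perm (Fin k))
      (e₁ : Fin m → ℝ) (e₂ : Fin k → ℝ),
    (∀ i, e₁ i = 1 ∨ e₁ i = -1) ∧ (∀ j, e₂ j = 1 ∨ e₂ j = -1) ∧
    y = fun i j => e₁ i * e₂ j * (if (t₁ i : ℕ) < r ∧ (t₂ j : ℕ) < l then 1 else 0)}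



section InterpAux

variable {ι : Type*} [Fintype ι]

lemma lNorm_top' (x : ι → ℝ) : lNorm ∞ x = ⨆ i, |x i| := by simp [lNorm]

lemma lNorm_fin' {s : ℝ≥0∞} (h : s ≠ ∞) (x : ι → ℝ) :
    lNorm s x = (∑ i, |x i| ^ s.toReal) ^ (1 / s.toReal) := by simp [lNorm, h]

lemma lNorm_nonneg (s : ℝ≥0∞) (x : ι → ℝ) : 0 ≤ lNorm s x := by
  unfold lNorm
  split
  · exact Real.iSup_nonneg fun i => abs_nonneg _
  · exact Real.rpow_nonneg (Finset.sum_nonneg fun i _ => Real.rpow_nonneg (abs_nonneg _) _) _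

lemma lNorm_mono (s : ℝ≥0∞) {f g : ι → ℝ} (hf : ∀ i, 0 ≤ f i) (h : ∀ i, f i ≤ g i) :
    lNorm s f ≤ lNorm s g := by
  have habs : ∀ i, |f i| ≤ |g i| := fun i => by
    rw [abs_of_nonneg (hf i), abs_of_nonneg ((hf i).trans (h i))]; exact h i
  unfold lNorm
  split
  · rcases isEmpty_or_nonempty ι with hι | hι
    · simp [Real.iSup_of_isEmpty]
    · exact ciSup_le fun i => (habs i).trans (le_ciSup (Finite.bddAbove_range fun j => |g j|) i)
  · exact Real.rpow_le_rpow (Finset.sum_nonneg fun i _ => Real.rpow_nonneg (abs_nonneg _) _)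
      (Finset.sum_le_sum fun i _ => Real.rpow_le_rpow (abs_nonneg _) (habs i) ENNReal.toReal_nonneg)
      (div_nonneg zero_le_one ENNReal.toReal_nonneg)

lemma lNorm_abs (s : ℝ≥0∞) (x : ι → ℝ) : lNorm s (fun i => |x i|) = lNorm s x := by
  unfold lNorm; simp [abs_abs]

lemma expOf_ir {s : ℝ≥0∞} (hs : 1 ≤ s) : expOf (ir s) = s := by
  unfold expOf ir
  rw [ENNReal.ofReal_toReal (ENNReal.inv_ne_top.mpr (by rintro rfl; simp at hs)), inv_inv]

lemma expOf_zero : expOf 0 = ∞ := by simp [expOf]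

lemma expOf_ne_top {t : ℝ} (ht : 0 < t) : expOf t ≠ ∞ := by
  simp [expOf, ENNReal.inv_ne_top, (ENNReal.ofReal_pos.mpr ht).ne']

lemma expOf_toReal {t : ℝ} (ht : 0 < t) : (expOf t).toReal = t⁻¹ := by
  rw [expOf, ENNReal.toReal_inv, ENNReal.toReal_ofReal ht.le]

lemma ir_top : ir ∞ = 0 := by simp [ir]

lemma ir_fin {s : ℝ≥0∞} (h : s ≠ ∞) : ir s = (s.toReal)⁻¹ := by
  rw [ir, ENNReal.toReal_inv]

lemma toReal_pos_of_one_le {s : ℝ≥0∞} (hs : 1 ≤ s) (h : s ≠ ∞) : 0 < s.toReal :=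
  ENNReal.toReal_pos (zero_lt_one.trans_le hs).ne' h

lemma interp_fin_fin (T₁ T₂ : ℝ) (hT₁ : 0 < T₁) (hT₂ : 0 < T₂)
    (lam : ℝ) (h0 : 0 < lam) (h1 : lam < 1) (f g : ι → ℝ)
    (hf : ∀ i, 0 ≤ f i) (hg : ∀ i, 0 ≤ g i) :
    (∑ i, (f i ^ (1 - lam) * g i ^ lam) ^ ((1 - lam) / T₁ + lam / T₂)⁻¹) ^
        ((1 - lam) / T₁ + lam / T₂) ≤
      (∑ i, f i ^ T₁) ^ ((1 - lam) / T₁) * (∑ i, g i ^ T₂) ^ (lam / T₂) := by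
  have hl1 : (0:ℝ) < 1 - lam := by linarith
  have hT₁' : T₁ ≠ 0 := hT₁.ne'
  have hT₂' : T₂ ≠ 0 := hT₂.ne'
  have hl1' : (1:ℝ) - lam ≠ 0 := hl1.ne'
  have h0' : lam ≠ 0 := h0.ne'
  set t : ℝ := (1 - lam) / T₁ + lam / T₂ with ht_def
  have ht : 0 < t := by positivity
  have ht' : t ≠ 0 := ht.ne'
  set T : ℝ := t⁻¹ with hT_def
  have hT : 0 < T := by positivity
  have hT' : T ≠ 0 := hT.ne'
  set u : ℝ := T₁ / ((1 - lam) * T) with hu_def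
  set v : ℝ := T₂ / (lam * T) with hv_def
  have hu0 : 0 < u := by positivity
  have hv0 : 0 < v := by positivity
  have hui : u⁻¹ = T * ((1 - lam) / T₁) := by rw [hu_def, inv_div]; ring
  have hvi : v⁻¹ = T * (lam / T₂) := by rw [hv_def, inv_div]; ring
  have huv : u⁻¹ + v⁻¹ = 1 := by
    rw [hui, hvi, ← mul_add, ← ht_def, hT_def, inv_mul_cancel₀ ht']
  have hu1 : 1 < u := by
    have hui1 : u⁻¹ < 1 := by
      rw [hui, hT_def, inv_mul_lt_iff₀ ht, mul_one, ht_def]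
      have hpos : 0 < lam / T₂ := by positivity
      linarith
    rcases inv_lt_one_iff₀.mp hui1 with h | h
    · exact absurd h (not_le.mpr hu0)
    · exact h
  have key := Real.inner_le_Lp_mul_Lq (Finset.univ (α := ι))
    (fun i => f i ^ ((1 - lam) * T)) (fun i => g i ^ (lam * T)) (Real.holderConjugate_iff.mpr ⟨hu1, huv⟩)
  simp only [abs_of_nonneg (Real.rpow_nonneg (hf _) _),
    abs_of_nonneg (Real.rpow_nonneg (hg _) _)] at key
  have e1 : ∀ i : ι, (f i ^ ((1 - lam) * T)) ^ u = f i ^ T₁ := by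
    intro i
    rw [← Real.rpow_mul (hf i)]
    congr 1
    rw [hu_def]; field_simp
  have e2 : ∀ i : ι, (g i ^ (lam * T)) ^ v = g i ^ T₂ := by
    intro i
    rw [← Real.rpow_mul (hg i)]
    congr 1
    rw [hv_def]; field_simp
  simp only [e1, e2] at key
  have eterm : ∀ i : ι, (f i ^ (1 - lam) * g i ^ lam) ^ t⁻¹ =
      f i ^ ((1 - lam) * T) * g i ^ (lam * T) := by
    intro i
    rw [Real.mul_rpow (Real.rpow_nonneg (hf i) _) (Real.rpow_nonneg (hg i) _),
      ← Real.rpow_mul (hf i), ← Real.rpow_mul (hg i), hT_def]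
  rw [show (∑ i, (f i ^ (1 - lam) * g i ^ lam) ^ t⁻¹) =
      ∑ i, f i ^ ((1 - lam) * T) * g i ^ (lam * T) from Finset.sum_congr rfl fun i _ => eterm i]
  have hA : (0:ℝ) ≤ ∑ i, f i ^ T₁ := Finset.sum_nonneg fun i _ => Real.rpow_nonneg (hf i) _
  have hB : (0:ℝ) ≤ ∑ i, g i ^ T₂ := Finset.sum_nonneg fun i _ => Real.rpow_nonneg (hg i) _
  calc (∑ i, f i ^ ((1 - lam) * T) * g i ^ (lam * T)) ^ t
      ≤ ((∑ i, f i ^ T₁) ^ (1/u) * (∑ i, g i ^ T₂) ^ (1/v)) ^ t := by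
        apply Real.rpow_le_rpow ?_ key ht.le
        exact Finset.sum_nonneg fun i _ => mul_nonneg (Real.rpow_nonneg (hf i) _)
          (Real.rpow_nonneg (hg i) _)
    _ = (∑ i, f i ^ T₁) ^ ((1 - lam) / T₁) * (∑ i, g i ^ T₂) ^ (lam / T₂) := by
        rw [Real.mul_rpow (Real.rpow_nonneg hA _) (Real.rpow_nonneg hB _),
          ← Real.rpow_mul hA, ← Real.rpow_mul hB]
        congr 1
        · congr 1
          rw [one_div, hui, hT_def]
          field_simp
        · congr 1
          rw [one_div, hvi, hT_def]
          field_simp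

lemma interp_top_fin (T₂ : ℝ) (hT₂ : 0 < T₂)
    (lam : ℝ) (h0 : 0 < lam) (h1 : lam < 1) (f g : ι → ℝ)
    (hf : ∀ i, 0 ≤ f i) (hg : ∀ i, 0 ≤ g i) :
    (∑ i, (f i ^ (1 - lam) * g i ^ lam) ^ (lam / T₂)⁻¹) ^ (lam / T₂) ≤
      (⨆ i, |f i|) ^ (1 - lam) * (∑ i, g i ^ T₂) ^ (lam / T₂) := by
  have hl1 : (0:ℝ) < 1 - lam := by linarith
  set t : ℝ := lam / T₂ with ht_def
  have ht : 0 < t := by positivity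
  rcases isEmpty_or_nonempty ι with hι | hι
  · simp only [Finset.univ_eq_empty, Finset.sum_empty, Real.iSup_of_isEmpty,
      Real.zero_rpow ht.ne', Real.zero_rpow hl1.ne', zero_mul, mul_zero, le_refl]
  · set F : ℝ := ⨆ i, |f i| with hF_def
    have hF0 : 0 ≤ F := Real.iSup_nonneg fun i => abs_nonneg _
    have hF : ∀ i, f i ≤ F := fun i =>
      (le_abs_self _).trans (le_ciSup (Finite.bddAbove_range fun j => |f j|) i)
    have hS : (0:ℝ) ≤ ∑ i, g i ^ T₂ := Finset.sum_nonneg fun i _ => Real.rpow_nonneg (hg i) _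
    have hstep : ∀ i : ι, (f i ^ (1 - lam) * g i ^ lam) ^ t⁻¹ ≤
        F ^ ((1 - lam) * t⁻¹) * g i ^ T₂ := by
      intro i
      rw [Real.mul_rpow (Real.rpow_nonneg (hf i) _) (Real.rpow_nonneg (hg i) _),
        ← Real.rpow_mul (hf i), ← Real.rpow_mul (hg i)]
      have : lam * t⁻¹ = T₂ := by rw [ht_def]; field_simp
      rw [this]
      exact mul_le_mul_of_nonneg_right
        (Real.rpow_le_rpow (hf i) (hF i) (by positivity)) (Real.rpow_nonneg (hg i) _)
    have hsum : (∑ i, (f i ^ (1 - lam) * g i ^ lam) ^ t⁻¹) ≤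
        F ^ ((1 - lam) * t⁻¹) * ∑ i, g i ^ T₂ := by
      rw [Finset.mul_sum]
      exact Finset.sum_le_sum fun i _ => hstep i
    calc (∑ i, (f i ^ (1 - lam) * g i ^ lam) ^ t⁻¹) ^ t
        ≤ (F ^ ((1 - lam) * t⁻¹) * ∑ i, g i ^ T₂) ^ t := by
          apply Real.rpow_le_rpow ?_ hsum ht.le
          exact Finset.sum_nonneg fun i _ => Real.rpow_nonneg
            (mul_nonneg (Real.rpow_nonneg (hf i) _) (Real.rpow_nonneg (hg i) _)) _
      _ = F ^ (1 - lam) * (∑ i, g i ^ T₂) ^ t := by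
          rw [Real.mul_rpow (Real.rpow_nonneg hF0 _) hS, ← Real.rpow_mul hF0]
          congr 2
          field_simp

lemma interp_top_top (lam : ℝ) (h0 : 0 ≤ lam) (h1 : lam ≤ 1) (f g : ι → ℝ)
    (hf : ∀ i, 0 ≤ f i) (hg : ∀ i, 0 ≤ g i) :
    (⨆ i, |f i ^ (1 - lam) * g i ^ lam|) ≤ (⨆ i, |f i|) ^ (1 - lam) * (⨆ i, |g i|) ^ lam := by
  rcases isEmpty_or_nonempty ι with hι | hι
  · rw [Real.iSup_of_isEmpty]
    exact mul_nonneg (Real.rpow_nonneg (Real.iSup_nonneg fun i => abs_nonneg _) _)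
      (Real.rpow_nonneg (Real.iSup_nonneg fun i => abs_nonneg _) _)
  · have hF0 : (0:ℝ) ≤ ⨆ i, |f i| := Real.iSup_nonneg fun i => abs_nonneg _
    refine ciSup_le fun i => ?_
    rw [abs_of_nonneg (mul_nonneg (Real.rpow_nonneg (hf i) _) (Real.rpow_nonneg (hg i) _))]
    have hFi : f i ≤ ⨆ j, |f j| :=
      (le_abs_self _).trans (le_ciSup (Finite.bddAbove_range fun j => |f j|) i)
    have hGi : g i ≤ ⨆ j, |g j| :=
      (le_abs_self _).trans (le_ciSup (Finite.bddAbove_range fun j => |g j|) i)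
    exact mul_le_mul (Real.rpow_le_rpow (hf i) hFi (by linarith))
      (Real.rpow_le_rpow (hg i) hGi h0) (Real.rpow_nonneg (hg i) _)
      (Real.rpow_nonneg hF0 _)

lemma lNorm_interp (θ₁ θ₂ : ℝ≥0∞) (hθ₁ : 1 ≤ θ₁) (hθ₂ : 1 ≤ θ₂)
    (lam : ℝ) (hl0 : 0 ≤ lam) (hl1 : lam ≤ 1) (f g : ι → ℝ)
    (hf : ∀ i, 0 ≤ f i) (hg : ∀ i, 0 ≤ g i) :
    lNorm (expOf ((1 - lam) * ir θ₁ + lam * ir θ₂)) (fun i => f i ^ (1 - lam) * g i ^ lam) ≤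
      lNorm θ₁ f ^ (1 - lam) * lNorm θ₂ g ^ lam := by
  rcases eq_or_lt_of_le hl0 with h | h0
  · subst h
    simp only [sub_zero, one_mul, zero_mul, add_zero, Real.rpow_one, Real.rpow_zero,
      mul_one, expOf_ir hθ₁, le_refl]
  rcases eq_or_lt_of_le hl1 with h | h1
  · subst h
    simp only [sub_self, zero_mul, one_mul, zero_add, Real.rpow_one, Real.rpow_zero,
      one_mul, expOf_ir hθ₂, le_refl]
  have habs1 : ∀ i : ι, |f i ^ (1 - lam) * g i ^ lam| = f i ^ (1 - lam) * g i ^ lam := fun i =>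
    abs_of_nonneg (mul_nonneg (Real.rpow_nonneg (hf i) _) (Real.rpow_nonneg (hg i) _))
  have habsf : ∀ i : ι, |f i| = f i := fun i => abs_of_nonneg (hf i)
  have habsg : ∀ i : ι, |g i| = g i := fun i => abs_of_nonneg (hg i)
  by_cases e₁ : θ₁ = ∞ <;> by_cases e₂ : θ₂ = ∞
  · subst e₁; subst e₂
    rw [show (1 - lam) * ir ∞ + lam * ir ∞ = 0 by simp [ir_top], expOf_zero,
      lNorm_top', lNorm_top', lNorm_top']
    exact interp_top_top lam hl0 hl1 f g hf hg
  · -- θ₁ = ∞, θ₂ finite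
    subst e₁
    have hT₂ : 0 < θ₂.toReal := toReal_pos_of_one_le hθ₂ e₂
    have hts : (1 - lam) * ir ∞ + lam * ir θ₂ = lam / θ₂.toReal := by
      rw [ir_top, ir_fin e₂]; ring
    have ht : 0 < lam / θ₂.toReal := by positivity
    rw [hts, lNorm_fin' (expOf_ne_top ht), expOf_toReal ht, lNorm_top', lNorm_fin' e₂]
    simp only [one_div, inv_inv, habs1, habsg]
    have hS : (0:ℝ) ≤ ∑ i, g i ^ θ₂.toReal :=
      Finset.sum_nonneg fun i _ => Real.rpow_nonneg (hg i) _
    rw [← Real.rpow_mul hS, show θ₂.toReal⁻¹ * lam = lam / θ₂.toReal by ring]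
    exact interp_top_fin θ₂.toReal hT₂ lam h0 h1 f g hf hg
  · -- θ₁ finite, θ₂ = ∞
    subst e₂
    have hT₁ : 0 < θ₁.toReal := toReal_pos_of_one_le hθ₁ e₁
    have hts : (1 - lam) * ir θ₁ + lam * ir ∞ = (1 - lam) / θ₁.toReal := by
      rw [ir_top, ir_fin e₁]; ring
    have hl1' : (0:ℝ) < 1 - lam := by linarith
    have ht : 0 < (1 - lam) / θ₁.toReal := by positivity
    rw [hts, lNorm_fin' (expOf_ne_top ht), expOf_toReal ht, lNorm_fin' e₁, lNorm_top']
    simp only [one_div, inv_inv, habs1, habsf]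
    have hS : (0:ℝ) ≤ ∑ i, f i ^ θ₁.toReal :=
      Finset.sum_nonneg fun i _ => Real.rpow_nonneg (hf i) _
    rw [← Real.rpow_mul hS, show θ₁.toReal⁻¹ * (1 - lam) = (1 - lam) / θ₁.toReal by ring]
    have key := interp_top_fin θ₁.toReal hT₁ (1 - lam) hl1' (by linarith) g f hg hf
    simp only [sub_sub_cancel] at key
    have eL : (∑ i, (f i ^ (1 - lam) * g i ^ lam) ^ ((1 - lam) / θ₁.toReal)⁻¹) =
        ∑ i, (g i ^ lam * f i ^ (1 - lam)) ^ ((1 - lam) / θ₁.toReal)⁻¹ := by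
      exact Finset.sum_congr rfl fun i _ => by rw [mul_comm]
    rw [eL, mul_comm ((∑ i, f i ^ θ₁.toReal) ^ ((1 - lam) / θ₁.toReal))]
    exact key
  · -- both finite
    have hT₁ : 0 < θ₁.toReal := toReal_pos_of_one_le hθ₁ e₁
    have hT₂ : 0 < θ₂.toReal := toReal_pos_of_one_le hθ₂ e₂
    have hts : (1 - lam) * ir θ₁ + lam * ir θ₂ =
        (1 - lam) / θ₁.toReal + lam / θ₂.toReal := by
      rw [ir_fin e₁, ir_fin e₂]; ring
    have hl1' : (0:ℝ) < 1 - lam := by linarith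
    have ht : 0 < (1 - lam) / θ₁.toReal + lam / θ₂.toReal := by positivity
    rw [hts, lNorm_fin' (expOf_ne_top ht), expOf_toReal ht, lNorm_fin' e₁, lNorm_fin' e₂]
    simp only [one_div, inv_inv, habs1, habsf, habsg]
    have hSf : (0:ℝ) ≤ ∑ i, f i ^ θ₁.toReal :=
      Finset.sum_nonneg fun i _ => Real.rpow_nonneg (hf i) _
    have hSg : (0:ℝ) ≤ ∑ i, g i ^ θ₂.toReal :=
      Finset.sum_nonneg fun i _ => Real.rpow_nonneg (hg i) _
    rw [← Real.rpow_mul hSf, ← Real.rpow_mul hSg,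
      show θ₁.toReal⁻¹ * (1 - lam) = (1 - lam) / θ₁.toReal by ring,
      show θ₂.toReal⁻¹ * lam = lam / θ₂.toReal by ring]
    exact interp_fin_fin θ₁.toReal θ₂.toReal hT₁ hT₂ lam h0 h1 f g hf hg

lemma lNorm_interp_self (p₁ p₂ : ℝ≥0∞) (hp₁ : 1 ≤ p₁) (hp₂ : 1 ≤ p₂)
    (lam : ℝ) (hl0 : 0 ≤ lam) (hl1 : lam ≤ 1) (y : ι → ℝ) :
    lNorm (expOf ((1 - lam) * ir p₁ + lam * ir p₂)) y ≤
      lNorm p₁ y ^ (1 - lam) * lNorm p₂ y ^ lam := by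
  have key := lNorm_interp p₁ p₂ hp₁ hp₂ lam hl0 hl1 (fun i => |y i|) (fun i => |y i|)
    (fun i => abs_nonneg _) (fun i => abs_nonneg _)
  have hne : (1:ℝ) - lam + lam ≠ 0 := by
    rw [show (1:ℝ) - lam + lam = 1 by ring]
    exact one_ne_zero
  have e : (fun i => |y i| ^ (1 - lam) * |y i| ^ lam) = fun i : ι => |y i| := by
    funext i
    rw [← Real.rpow_add' (abs_nonneg _) hne, show (1:ℝ) - lam + lam = 1 by ring, Real.rpow_one]
  simp only [e] at key
  rwa [lNorm_abs, lNorm_abs, lNorm_abs] at key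

end InterpAux

/-- **Interpolation inequality for mixed norms.** If `1/p = (1−λ)/p₁ + λ/p₂` and
`1/θ = (1−λ)/θ₁ + λ/θ₂`, then for every `x ∈ ℝ^{m·k}`,
`‖x‖_{p,θ} ≤ ‖x‖_{p₁,θ₁}^{1−λ} ⋅ ‖x‖_{p₂,θ₂}^{λ}`. -/
theorem statement10 (m k : ℕ)
    (p₁ p₂ θ₁ θ₂ : ℝ≥0∞) (hp₁ : 1 ≤ p₁) (hp₂ : 1 ≤ p₂) (hθ₁ : 1 ≤ θ₁) (hθ₂ : 1 ≤ θ₂)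
    (lam : ℝ) (hl0 : 0 ≤ lam) (hl1 : lam ≤ 1) (x : Fin m → Fin k → ℝ) :
    mixedNorm (expOf ((1 - lam) * ir p₁ + lam * ir p₂))
        (expOf ((1 - lam) * ir θ₁ + lam * ir θ₂)) x ≤
      mixedNorm p₁ θ₁ x ^ (1 - lam) * mixedNorm p₂ θ₂ x ^ lam := by
  unfold mixedNorm
  calc lNorm (expOf ((1 - lam) * ir θ₁ + lam * ir θ₂))
        (fun j => lNorm (expOf ((1 - lam) * ir p₁ + lam * ir p₂)) fun i => x i j)
      ≤ lNorm (expOf ((1 - lam) * ir θ₁ + lam * ir θ₂))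
        (fun j => (lNorm p₁ fun i => x i j) ^ (1 - lam) * (lNorm p₂ fun i => x i j) ^ lam) :=
        lNorm_mono _ (fun j => lNorm_nonneg _ _)
          (fun j => lNorm_interp_self p₁ p₂ hp₁ hp₂ lam hl0 hl1 _)
    _ ≤ _ := lNorm_interp θ₁ θ₂ hθ₁ hθ₂ lam hl0 hl1 _ _
        (fun j => lNorm_nonneg _ _) (fun j => lNorm_nonneg _ _)

end
end

section
/- There exists an absolute constant c > 0 (one can take c = 1/2) such that for all 1 ≤ q < ∞ and 1 ≤ σ < ∞, all m, k ∈ ℕ, and all n ∈ ℤ_+ with n ≤ mk/2, one has d_n(B^{m,k}_{∞,∞}, l^{m,k}_{q,σ}) ≥ c · m^{1/q} k^{1/σ}. -/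
open scoped ENNReal NNReal BigOperators Pointwise

noncomputable section

/-! For a subspace `L` of dimension at most `n`, an extreme point `z` of the section of the
cube by the annihilator of `L` has at least `mk - n` coordinates equal to `±1`. The sign
pattern `x = sign z` lies in the cube, and for every `y ∈ L` pairing with `z` gives
`‖x - y‖₁ ≥ ⟪x - y, z⟫ = ‖z‖₁ ≥ mk - n ≥ mk / 2`. Hölder's inequality
`‖·‖₁ ≤ m^{1 - 1/q} k^{1 - 1/σ} ‖·‖_{q,σ}` turns this into the bound with `c = 1/2`. -/

open Finset Module

section lNorm

variable {ι : Type*} [Fintype ι] {t : ℝ≥0∞}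

lemma ir_eq_one_div_toReal (t : ℝ≥0∞) : ir t = 1 / t.toReal := by
  rw [ir, ENNReal.toReal_inv, one_div]

lemma lNorm_of_ne_top (ht : t ≠ ∞) (v : ι → ℝ) :
    lNorm t v = (∑ i, |v i| ^ t.toReal) ^ (1 / t.toReal) :=
  if_neg ht

lemma lNorm_nonneg_s12 (t : ℝ≥0∞) (v : ι → ℝ) : 0 ≤ lNorm t v := by
  unfold lNorm
  split_ifs
  · exact Real.iSup_nonneg fun i => abs_nonneg _
  · positivity

lemma lNorm_top_le_iff {v : ι → ℝ} {c : ℝ} (hc : 0 ≤ c) :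
    lNorm ∞ v ≤ c ↔ ∀ i, |v i| ≤ c := by
  rw [lNorm, if_pos rfl]
  exact ⟨fun h i => (le_ciSup (Set.finite_range _).bddAbove i).trans h,
    fun h => Real.iSup_le h hc⟩

lemma sum_abs_le_card_rpow_mul_lNorm (ht1 : 1 ≤ t) (ht : t ≠ ∞) (v : ι → ℝ) :
    ∑ i, |v i| ≤ (Fintype.card ι : ℝ) ^ (1 - ir t) * lNorm t v := by
  have hp : 1 ≤ t.toReal := by simpa using ENNReal.toReal_mono ht ht1
  have hp0 : t.toReal ≠ 0 := by positivity
  have hholder := Real.rpow_sum_le_const_mul_sum_rpow (s := univ) (f := v) hp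
  calc ∑ i, |v i| = ((∑ i, |v i|) ^ t.toReal) ^ (1 / t.toReal) := by
        rw [← Real.rpow_mul (by positivity), mul_one_div_cancel hp0, Real.rpow_one]
    _ ≤ ((Fintype.card ι : ℝ) ^ (t.toReal - 1) * ∑ i, |v i| ^ t.toReal) ^ (1 / t.toReal) := by
        simpa using Real.rpow_le_rpow (by positivity) hholder (by positivity)
    _ = (Fintype.card ι : ℝ) ^ (1 - ir t) * lNorm t v := by
        rw [Real.mul_rpow (by positivity) (by positivity), ← Real.rpow_mul (by positivity),
          lNorm_of_ne_top ht, ir_eq_one_div_toReal t, sub_mul, one_mul, mul_one_div_cancel hp0]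

lemma lNorm_le_card_rpow_mul (ht0 : t ≠ 0) (ht : t ≠ ∞) {v : ι → ℝ} {c : ℝ} (hc : 0 ≤ c)
    (hv : ∀ i, |v i| ≤ c) : lNorm t v ≤ (Fintype.card ι : ℝ) ^ ir t * c := by
  have hp : 0 < t.toReal := ENNReal.toReal_pos ht0 ht
  calc lNorm t v ≤ (∑ _i : ι, c ^ t.toReal) ^ (1 / t.toReal) := by
        rw [lNorm_of_ne_top ht]
        gcongr with i
        exact hv i
    _ = (Fintype.card ι : ℝ) ^ ir t * c := by
        rw [sum_const, card_univ, nsmul_eq_mul, Real.mul_rpow (by positivity) (by positivity),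
          ← Real.rpow_mul hc, mul_one_div_cancel hp.ne', Real.rpow_one, ir_eq_one_div_toReal t]

end lNorm

section mixedNorm

variable {m k : ℕ} {q σ : ℝ≥0∞}

lemma mixedNorm_nonneg (x : Fin m → Fin k → ℝ) : 0 ≤ mixedNorm q σ x :=
  lNorm_nonneg_s12 _ _

lemma mem_mixedBall_top_top_iff {x : Fin m → Fin k → ℝ} :
    x ∈ mixedBall m k ∞ ∞ ↔ ∀ i j, |x i j| ≤ 1 := by
  simp only [mixedBall, Set.mem_ofPred_eq, mixedNorm, lNorm_top_le_iff zero_le_one,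
    abs_of_nonneg (lNorm_nonneg_s12 _ _)]
  exact forall_comm

lemma sum_sum_abs_le_mixedNorm (hq1 : 1 ≤ q) (hq : q ≠ ∞) (hσ1 : 1 ≤ σ) (hσ : σ ≠ ∞)
    (x : Fin m → Fin k → ℝ) :
    ∑ i, ∑ j, |x i j| ≤ (m : ℝ) ^ (1 - ir q) * (k : ℝ) ^ (1 - ir σ) * mixedNorm q σ x := by
  calc ∑ i, ∑ j, |x i j| = ∑ j, ∑ i, |x i j| := sum_comm
    _ ≤ ∑ j, (m : ℝ) ^ (1 - ir q) * |lNorm q fun i => x i j| := by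
        gcongr with j
        simpa [abs_of_nonneg (lNorm_nonneg_s12 _ _)] using
          sum_abs_le_card_rpow_mul_lNorm hq1 hq fun i => x i j
    _ ≤ (m : ℝ) ^ (1 - ir q) * ((k : ℝ) ^ (1 - ir σ) * mixedNorm q σ x) := by
        rw [← mul_sum]
        gcongr
        simpa [mixedNorm] using
          sum_abs_le_card_rpow_mul_lNorm hσ1 hσ fun j => lNorm q fun i => x i j
    _ = _ := (mul_assoc _ _ _).symm

lemma mixedNorm_le_of_abs_le (hq0 : q ≠ 0) (hq : q ≠ ∞) (hσ0 : σ ≠ 0) (hσ : σ ≠ ∞)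
    {x : Fin m → Fin k → ℝ} {c : ℝ} (hc : 0 ≤ c) (hx : ∀ i j, |x i j| ≤ c) :
    mixedNorm q σ x ≤ (k : ℝ) ^ ir σ * ((m : ℝ) ^ ir q * c) := by
  have hcol : ∀ j, |lNorm q fun i => x i j| ≤ (m : ℝ) ^ ir q * c := fun j => by
    simpa [abs_of_nonneg (lNorm_nonneg_s12 _ _)] using
      lNorm_le_card_rpow_mul hq0 hq hc fun i => hx i j
  simpa [mixedNorm] using lNorm_le_card_rpow_mul hσ0 hσ (by positivity) hcol

end mixedNorm

section Cube

variable {ι : Type*} [Fintype ι]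

lemma exists_pos_forall_abs_add_mul_le_one {z w : ι → ℝ} (hz : ∀ i, |z i| ≤ 1)
    (hw : ∀ i, |z i| = 1 → w i = 0) :
    ∃ t > 0, ∀ s : ℝ, |s| ≤ t → ∀ i, |z i + s * w i| ≤ 1 := by
  have hev : ∀ᶠ s in nhds (0 : ℝ), ∀ i, |z i + s * w i| ≤ 1 := by
    refine Filter.eventually_all.2 fun i => ?_
    rcases (hz i).lt_or_eq with hlt | heq
    · have hcont : Continuous fun s : ℝ => |z i + s * w i| := by fun_prop
      filter_upwards [hcont.continuousAt.eventually_lt continuousAt_const (by simpa using hlt)]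
        with s hs using hs.le
    · exact Filter.Eventually.of_forall fun s => by simpa [hw i heq] using hz i
  obtain ⟨ε, hε, hball⟩ := Metric.eventually_nhds_iff_ball.1 hev
  refine ⟨ε / 2, half_pos hε, fun s hs => hball s ?_⟩
  rw [Metric.mem_ball, dist_zero_right, Real.norm_eq_abs]
  linarith

lemma mem_closedBall_zero_one_iff {z : ι → ℝ} :
    z ∈ Metric.closedBall (0 : ι → ℝ) 1 ↔ ∀ i, |z i| ≤ 1 := by
  simp [pi_norm_le_iff_of_nonneg zero_le_one]

/-- A direction of `E` vanishing on the coordinates where `|z i| = 1` could be used to move `z`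
both ways inside the section, contradicting extremality. -/
lemma finrank_le_card_abs_eq_one_of_mem_extremePoints {E : Submodule ℝ (ι → ℝ)}
    {z : ι → ℝ} (hz : z ∈ ((E : Set (ι → ℝ)) ∩ Metric.closedBall 0 1).extremePoints ℝ) :
    finrank ℝ E ≤ #{i | |z i| = 1} := by
  obtain ⟨⟨hzE, hzcube⟩, hzext⟩ := mem_extremePoints.1 hz
  rw [mem_closedBall_zero_one_iff] at hzcube
  let S : Finset ι := {i | |z i| = 1}
  let restrict : E →ₗ[ℝ] (S → ℝ) := LinearMap.funLeft ℝ ℝ Subtype.val ∘ₗ E.subtype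
  have hinj : Function.Injective restrict := by
    refine (injective_iff_map_eq_zero restrict).2 fun w hw => ?_
    have hwS : ∀ i, |z i| = 1 → (w : ι → ℝ) i = 0 := fun i hi =>
      congr_fun hw ⟨i, mem_filter.2 ⟨mem_univ i, hi⟩⟩
    obtain ⟨t, ht, hmove⟩ := exists_pos_forall_abs_add_mul_le_one hzcube hwS
    have hmem : ∀ s : ℝ, |s| ≤ t →
        z + s • (w : ι → ℝ) ∈ (E : Set (ι → ℝ)) ∩ Metric.closedBall 0 1 := fun s hs =>
      ⟨E.add_mem hzE (E.smul_mem s w.2), mem_closedBall_zero_one_iff.2 (hmove s hs)⟩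
    have hseg : z ∈ openSegment ℝ (z + t • (w : ι → ℝ)) (z + (-t) • (w : ι → ℝ)) :=
      ⟨1 / 2, 1 / 2, by norm_num, by norm_num, by norm_num, by module⟩
    have htw : z + t • (w : ι → ℝ) = z :=
      (hzext _ (hmem t (abs_of_pos ht).le) _ (hmem (-t) (by simp [abs_of_pos ht])) hseg).1
    have : t • (w : ι → ℝ) = 0 := by simpa using htw
    exact Subtype.ext ((smul_eq_zero.1 this).resolve_left ht.ne')
  simpa [S, Fintype.card_subtype] using LinearMap.finrank_le_finrank_of_injective hinj

lemma exists_mem_abs_le_one_finrank_le_sum_abs (E : Submodule ℝ (ι → ℝ)) :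
    ∃ z ∈ E, (∀ i, |z i| ≤ 1) ∧ (finrank ℝ E : ℝ) ≤ ∑ i, |z i| := by
  have hK : IsCompact ((E : Set (ι → ℝ)) ∩ Metric.closedBall 0 1) :=
    (isCompact_closedBall 0 1).inter_left E.closed_of_finiteDimensional
  obtain ⟨z, hz⟩ := hK.extremePoints_nonempty ⟨0, E.zero_mem, by simp⟩
  have hzK := (mem_extremePoints.1 hz).1
  have hzcube := mem_closedBall_zero_one_iff.1 hzK.2
  refine ⟨z, hzK.1, hzcube, ?_⟩
  calc (finrank ℝ E : ℝ) ≤ #{i | |z i| = 1} := by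
        exact_mod_cast finrank_le_card_abs_eq_one_of_mem_extremePoints hz
    _ = ∑ i ∈ {i | |z i| = 1}, |z i| := by
        rw [sum_congr rfl fun i hi => (mem_filter.1 hi).2]
        simp
    _ ≤ ∑ i, |z i| := sum_le_sum_of_subset_of_nonneg (subset_univ _) fun i _ _ => abs_nonneg _

lemma exists_dotProduct_eq_zero_card_sub_finrank_le_sum_abs (L : Submodule ℝ (ι → ℝ)) :
    ∃ z : ι → ℝ, (∀ y ∈ L, y ⬝ᵥ z = 0) ∧ (∀ i, |z i| ≤ 1) ∧
      (Fintype.card ι : ℝ) - finrank ℝ L ≤ ∑ i, |z i| := by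
  let pairing : (ι → ℝ) →ₗ[ℝ] L →ₗ[ℝ] ℝ := (dotProductBilin ℝ ℝ).flip.compl₂ L.subtype
  obtain ⟨z, hz, hzcube, hzsum⟩ :=
    exists_mem_abs_le_one_finrank_le_sum_abs (LinearMap.ker pairing)
  refine ⟨z, fun y hy => by simpa [pairing] using LinearMap.congr_fun hz ⟨y, hy⟩, hzcube, ?_⟩
  have hrange : finrank ℝ (LinearMap.range pairing) ≤ finrank ℝ L := by
    simpa [Subspace.dual_finrank_eq] using Submodule.finrank_le (LinearMap.range pairing)
  have hrank := LinearMap.finrank_range_add_finrank_ker pairing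
  rw [Module.finrank_fintype_fun_eq_card] at hrank
  have hdim : (Fintype.card ι : ℝ) ≤ finrank ℝ L + finrank ℝ (LinearMap.ker pairing) := by
    exact_mod_cast hrank ▸ Nat.add_le_add_right hrange _
  linarith

lemma exists_abs_le_one_card_sub_finrank_le_sum_abs_sub (L : Submodule ℝ (ι → ℝ)) :
    ∃ x : ι → ℝ, (∀ i, |x i| ≤ 1) ∧
      ∀ y ∈ L, (Fintype.card ι : ℝ) - finrank ℝ L ≤ ∑ i, |x i - y i| := by
  obtain ⟨z, hzL, hzcube, hzsum⟩ := exists_dotProduct_eq_zero_card_sub_finrank_le_sum_abs L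
  refine ⟨fun i => SignType.sign (z i), fun i => ?_, fun y hy => hzsum.trans ?_⟩
  · rcases lt_trichotomy (z i) 0 with h | h | h <;> simp [h]
  calc ∑ i, |z i| = ∑ i, (SignType.sign (z i) - y i) * z i := by
        simp only [sub_mul, sum_sub_distrib, sign_mul_self]
        rw [← dotProduct, hzL y hy, sub_zero]
    _ ≤ ∑ i, |SignType.sign (z i) - y i| := by
        gcongr with i
        calc _ ≤ |(SignType.sign (z i) - y i) * z i| := le_abs_self _
          _ ≤ |SignType.sign (z i) - y i| * 1 := by
              rw [abs_mul]; gcongr; exact hzcube i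
          _ = _ := mul_one _

end Cube

lemma exists_mem_mixedBall_top_top_forall_mem_sub_finrank_le {m k : ℕ}
    (L : Submodule ℝ (Fin m → Fin k → ℝ)) :
    ∃ x ∈ mixedBall m k ∞ ∞,
      ∀ y ∈ L, (m * k : ℝ) - finrank ℝ L ≤ ∑ i, ∑ j, |x i j - y i j| := by
  let e := LinearEquiv.curry ℝ ℝ (Fin m) (Fin k)
  obtain ⟨x, hxcube, hx⟩ :=
    exists_abs_le_one_card_sub_finrank_le_sum_abs_sub (L.map e.symm.toLinearMap)
  refine ⟨e x, mem_mixedBall_top_top_iff.2 fun i j => hxcube (i, j), fun y hy => ?_⟩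
  have := hx (e.symm y) (Submodule.mem_map_of_mem hy)
  rw [LinearEquiv.finrank_map_eq, Fintype.sum_prod_type] at this
  simpa [e] using this

lemma le_kolWidth {m k n : ℕ} {M : Set (Fin m → Fin k → ℝ)} {q σ : ℝ≥0∞} {c C : ℝ}
    (hM : ∀ x ∈ M, mixedNorm q σ x ≤ C)
    (h : ∀ L : Submodule ℝ (Fin m → Fin k → ℝ), finrank ℝ L ≤ n →
      ∃ x ∈ M, ∀ y ∈ L, c ≤ mixedNorm q σ (x - y)) :
    c ≤ kolWidth m k n M q σ := by
  have : Nonempty {L : Submodule ℝ (Fin m → Fin k → ℝ) // finrank ℝ L ≤ n} :=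
    ⟨⟨⊥, by simp⟩⟩
  refine le_ciInf fun L => ?_
  obtain ⟨x, hxM, hx⟩ := h L.1 L.2
  have hbdd : BddAbove (Set.range fun x : M =>
      ⨅ y : L.1, mixedNorm q σ ((x : Fin m → Fin k → ℝ) - (y : Fin m → Fin k → ℝ))) := by
    refine ⟨C, Set.forall_mem_range.2 fun x => ?_⟩
    simpa using (ciInf_le ⟨0, Set.forall_mem_range.2 fun _ => mixedNorm_nonneg _⟩ 0).trans
      (by simpa using hM x x.2)
  exact (le_ciInf fun y : L.1 => hx y y.2).trans (le_ciSup hbdd ⟨x, hxM⟩)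

/-- There is an absolute constant `c > 0` (one can take `c = 1/2`) such that for all
`1 ≤ q, σ < ∞`, all `m, k ≥ 1` and all `0 ≤ n ≤ mk/2`,
`d_n(B^{m,k}_{∞,∞}, l^{m,k}_{q,σ}) ≥ c ⋅ m^{1/q} k^{1/σ}`. -/
theorem statement12 :
    ∃ c : ℝ, 0 < c ∧
      ∀ (q σ : ℝ≥0∞), 1 ≤ q → q ≠ ∞ → 1 ≤ σ → σ ≠ ∞ →
      ∀ (m k n : ℕ), 0 < m → 0 < k → 2 * n ≤ m * k →
        c * ((m : ℝ) ^ ir q * (k : ℝ) ^ ir σ) ≤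
          kolWidth m k n (mixedBall m k ∞ ∞) q σ := by
  refine ⟨1 / 2, by norm_num, fun q σ hq1 hq hσ1 hσ m k n hm hk hn => ?_⟩
  have hq0 : q ≠ 0 := (zero_lt_one.trans_le hq1).ne'
  have hσ0 : σ ≠ 0 := (zero_lt_one.trans_le hσ1).ne'
  refine le_kolWidth (fun x hx => mixedNorm_le_of_abs_le hq0 hq hσ0 hσ zero_le_one
    (mem_mixedBall_top_top_iff.1 hx)) fun L hL => ?_
  obtain ⟨x, hxball, hx⟩ := exists_mem_mixedBall_top_top_forall_mem_sub_finrank_le L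
  refine ⟨x, hxball, fun y hy => ?_⟩
  have hm0 : (0 : ℝ) < m := by exact_mod_cast hm
  have hk0 : (0 : ℝ) < k := by exact_mod_cast hk
  have hn' : (2 * n : ℝ) ≤ m * k := by exact_mod_cast hn
  have hL' : (finrank ℝ L : ℝ) ≤ n := by exact_mod_cast hL
  have hfar : (m * k : ℝ) / 2 ≤
      (m : ℝ) ^ (1 - ir q) * (k : ℝ) ^ (1 - ir σ) * mixedNorm q σ (x - y) :=
    calc (m * k : ℝ) / 2 ≤ m * k - finrank ℝ L := by linarith
      _ ≤ ∑ i, ∑ j, |(x - y) i j| := hx y hy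
      _ ≤ _ := sum_sum_abs_le_mixedNorm hq1 hq hσ1 hσ (x - y)
  have hsplit : (m * k : ℝ) / 2 = (m : ℝ) ^ (1 - ir q) * (k : ℝ) ^ (1 - ir σ) *
      (1 / 2 * ((m : ℝ) ^ ir q * (k : ℝ) ^ ir σ)) := by
    rw [Real.rpow_sub hm0, Real.rpow_sub hk0, Real.rpow_one, Real.rpow_one]
    field_simp
  rw [hsplit] at hfar
  exact le_of_mul_le_mul_left hfar (by positivity)

end
end
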